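/- arXiv:1802.09760 — 3 statements merged into one kernel-verified Lean document; each statement's English description precedes it below -/
import Mathlib

section
/- The rank-2 Kac polynomial A_{g,2}, a priori a rational function in q and η_1,…,η_{2g} subject to the relations η_{2i−1}η_{2i} = q, is for g = 1 a genuine polynomial: substituting η_1 = a, η_2 = q/a into the formula for A_{1,2} yields an element of ℤ[q, a, q/a] with no poles at q = 1, q = −1, or q² = 1. -/
set_option maxHeartbeats 1000000

lemma kac_aux {F : Type*} [Field F] (q a b : F) (hb : a * b = q)
    (h2 : (2 : F) ≠ 0)
    (hq1 : q - 1 ≠ 0) (h1q : 1 + q ≠ 0) (h1a : 1 - a ≠ 0) (h1b : 1 - b ≠ 0) :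
    ((1 - a) * (1 - b) *
        ((1 - q * a) * (1 - q * b) / ((q - 1) * (q ^ 2 - 1)) -
          (1 + a) * (1 + b) / (4 * (1 + q)) +
          (1 - a) * (1 - b) / (2 * (q - 1)) *
            (1 / 2 - 1 / (q - 1) - 1 / (1 - a) - 1 / (1 - b)))) = 1 + q - a - b := by
  have hq1' : q + 1 ≠ 0 := fun h => h1q (by rw [← h]; ring)
  have hq2 : q ^ 2 - 1 ≠ 0 := by
    have h : q ^ 2 - 1 = (q - 1) * (q + 1) := by ring
    rw [h]; exact mul_ne_zero hq1 hq1'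
  have h4 : (4 : F) ≠ 0 := by
    have : (4 : F) = 2 * 2 := by norm_num
    rw [this]; exact mul_ne_zero h2 h2
  have e1 : (1 / 2 - 1 / (q-1) - 1 / (1-a) - 1 / (1-b) : F)
      = ((q-1)*(1-a)*(1-b) - 2*(1-a)*(1-b) - 2*(q-1)*(1-b) - 2*(q-1)*(1-a))
        / (2*((q-1)*((1-a)*(1-b)))) := by
    field_simp
  have hD1 : (q - 1) * (q ^ 2 - 1) ≠ 0 := mul_ne_zero hq1 hq2
  have hD2 : (4 : F) * (1 + q) ≠ 0 := mul_ne_zero h4 h1q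
  have hD3 : (2 : F) * (q - 1) * (2*((q-1)*((1-a)*(1-b)))) ≠ 0 :=
    mul_ne_zero (mul_ne_zero h2 hq1)
      (mul_ne_zero h2 (mul_ne_zero hq1 (mul_ne_zero h1a h1b)))
  rw [e1, div_mul_div_comm, div_sub_div _ _ hD1 hD2,
    div_add_div _ _ (mul_ne_zero hD1 hD2) hD3, ← mul_div_assoc,
    div_eq_iff (mul_ne_zero (mul_ne_zero hD1 hD2) hD3)]
  subst hb
  ring

/-- For `g = 1`, substituting `η₁ = a`, `η₂ = q/a` into the formula for
the rank-2 Kac polynomial `A_{1,2}` yields an element of the subring `ℤ[q, a, q/a]`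
of the field of rational functions in `q, a`; in particular it has no poles (at
`q = ±1` or elsewhere). -/
theorem stmt_4 :
    let K := FractionRing (MvPolynomial (Fin 2) ℚ)
    let q : K := algebraMap (MvPolynomial (Fin 2) ℚ) K (MvPolynomial.X 0)
    let a : K := algebraMap (MvPolynomial (Fin 2) ℚ) K (MvPolynomial.X 1)
    ((1 - a) * (1 - q / a) *
        ((1 - q * a) * (1 - q * (q / a)) / ((q - 1) * (q ^ 2 - 1)) -
          (1 + a) * (1 + q / a) / (4 * (1 + q)) +
          (1 - a) * (1 - q / a) / (2 * (q - 1)) *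
            (1 / 2 - 1 / (q - 1) - 1 / (1 - a) - 1 / (1 - q / a)))) ∈
      Subring.closure {q, a, q / a} := by
  intro K q a
  have inj := IsFractionRing.injective (MvPolynomial (Fin 2) ℚ) K
  have hne : ∀ (p : MvPolynomial (Fin 2) ℚ) (v : Fin 2 → ℚ),
      MvPolynomial.eval v p ≠ 0 → algebraMap (MvPolynomial (Fin 2) ℚ) K p ≠ 0 := by
    intro p v hv
    refine (map_ne_zero_iff _ inj).mpr fun h => hv ?_
    rw [h]; simp
  have ha : a ≠ 0 := hne _ (fun _ => 1) (by simp)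
  have hq1 : q - 1 ≠ 0 := by
    have := hne (MvPolynomial.X 0 - 1) (fun _ => 0) (by simp)
    simpa [map_sub] using this
  have h1q : 1 + q ≠ 0 := by
    have := hne (1 + MvPolynomial.X 0) (fun _ => 0) (by simp)
    simpa [map_add] using this
  have h1a : 1 - a ≠ 0 := by
    have := hne (1 - MvPolynomial.X 1) ![0, 0] (by simp)
    simpa [map_sub] using this
  have haq : a - q ≠ 0 := by
    have := hne (MvPolynomial.X 1 - MvPolynomial.X 0) ![0, 1] (by simp)
    simpa [map_sub] using this
  have h1qa : 1 - q / a ≠ 0 := by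
    rw [sub_ne_zero]
    intro h
    apply haq
    rw [eq_div_iff ha, one_mul] at h
    rw [h]; ring
  have h2 : (2 : K) ≠ 0 := two_ne_zero
  have hb : a * (q / a) = q := by rw [mul_comm]; exact div_mul_cancel₀ q ha
  rw [kac_aux q a (q / a) hb h2 hq1 h1q h1a h1qa]
  have hqm : q ∈ Subring.closure {q, a, q / a} :=
    Subring.subset_closure (by simp)
  have ham : a ∈ Subring.closure {q, a, q / a} :=
    Subring.subset_closure (by simp)
  have hbm : q / a ∈ Subring.closure {q, a, q / a} :=
    Subring.subset_closure (by simp)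
  exact sub_mem (sub_mem (add_mem (one_mem _) hqm) ham) hbm
end

section
/- The expression C^{abs}_{S_g,3}(t) = (t^{9g−3} − t^{5g+2} − t^{5g−2} − t^{5g−3} + t^{3g+2} + t^{3g−2}) / ((t²−1)(t³−1)) is a polynomial in t with integer coefficients for every integer g ≥ 2; that is, (t²−1)(t³−1) divides the numerator in ℤ[t]. -/
open Polynomial

private lemma key (k : ℕ) :
    ((X ^ 2 - 1) * (X ^ 3 - 1) : Polynomial ℤ) ∣
      (X ^ (9 * k + 15) - X ^ (5 * k + 12) - X ^ (5 * k + 8) - X ^ (5 * k + 7)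
        + X ^ (3 * k + 8) + X ^ (3 * k + 4)) := by
  induction k with
  | zero =>
    exact ⟨X ^ 10 + X ^ 8 + X ^ 6 + X ^ 4, by ring⟩
  | succ n ih =>
    have hT : ((X ^ 3 - 1 : Polynomial ℤ)) ∣
        (X ^ (9 * n + 18) * (X ^ 4 + X ^ 2 + 1)
          - X ^ (5 * n + 15) - X ^ (5 * n + 11) - X ^ (5 * n + 10)) := by
      have e : (X ^ (9 * n + 18) * (X ^ 4 + X ^ 2 + 1)
          - X ^ (5 * n + 15) - X ^ (5 * n + 11) - X ^ (5 * n + 10) : Polynomial ℤ)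
          = (X ^ (9 * n + 18) - 1) * (X ^ 4 + X ^ 2 + 1)
            - (X ^ (5 * n + 10) - 1) * (X ^ 5 + X + 1)
            - X * (X - 1) * (X ^ 3 - 1) := by
        ring
      rw [e]
      have h1 : ((X ^ 3 - 1 : Polynomial ℤ)) ∣ (X ^ (9 * n + 18) - 1) := by
        have := sub_dvd_pow_sub_pow (X ^ 3 : Polynomial ℤ) 1 (3 * n + 6)
        have e9 : 3 * (3 * n + 6) = 9 * n + 18 := by ring
        simpa [← pow_mul, e9] using this
      have h2 : ((X ^ 3 - 1 : Polynomial ℤ)) ∣ (X ^ (5 * n + 10) - 1) * (X ^ 5 + X + 1) := by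
        have ha : ((X - 1 : Polynomial ℤ)) ∣ (X ^ (5 * n + 10) - 1) := by
          have := sub_dvd_pow_sub_pow (X : Polynomial ℤ) 1 (5 * n + 10)
          simpa using this
        have hb : ((X ^ 2 + X + 1 : Polynomial ℤ)) ∣ (X ^ 5 + X + 1) :=
          ⟨X ^ 3 - X ^ 2 + 1, by ring⟩
        have := mul_dvd_mul ha hb
        have e2 : ((X - 1) * (X ^ 2 + X + 1) : Polynomial ℤ) = X ^ 3 - 1 := by ring
        rwa [e2] at this
      exact dvd_sub (dvd_sub (h1.mul_right _) h2) (Dvd.intro_left _ rfl)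
    have estep : (X ^ (9 * (n + 1) + 15) - X ^ (5 * (n + 1) + 12) - X ^ (5 * (n + 1) + 8)
          - X ^ (5 * (n + 1) + 7) + X ^ (3 * (n + 1) + 8) + X ^ (3 * (n + 1) + 4) : Polynomial ℤ)
        = X ^ 3 * (X ^ (9 * n + 15) - X ^ (5 * n + 12) - X ^ (5 * n + 8) - X ^ (5 * n + 7)
            + X ^ (3 * n + 8) + X ^ (3 * n + 4))
          + (X ^ 2 - 1) * (X ^ (9 * n + 18) * (X ^ 4 + X ^ 2 + 1)
            - X ^ (5 * n + 15) - X ^ (5 * n + 11) - X ^ (5 * n + 10)) := by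
      ring
    rw [estep]
    refine dvd_add (Dvd.dvd.mul_left ih _) ?_
    exact mul_dvd_mul_left _ hT

/-- for every `g ≥ 2`, `(t²−1)(t³−1)` divides
`t^{9g−3} − t^{5g+2} − t^{5g−2} − t^{5g−3} + t^{3g+2} + t^{3g−2}` in `ℤ[t]`, i.e.
`C^{abs}_{S_g,3}(t)` is a polynomial with integer coefficients. -/
theorem stmt_11 (g : ℕ) (hg : 2 ≤ g) :
    ((X ^ 2 - 1) * (X ^ 3 - 1) : Polynomial ℤ) ∣
      (X ^ (9 * g - 3) - X ^ (5 * g + 2) - X ^ (5 * g - 2) - X ^ (5 * g - 3)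
        + X ^ (3 * g + 2) + X ^ (3 * g - 2)) := by
  obtain ⟨k, rfl⟩ : ∃ k, g = 2 + k := ⟨g - 2, by omega⟩
  have e1 : 9 * (2 + k) - 3 = 9 * k + 15 := by omega
  have e2 : 5 * (2 + k) + 2 = 5 * k + 12 := by omega
  have e3 : 5 * (2 + k) - 2 = 5 * k + 8 := by omega
  have e4 : 5 * (2 + k) - 3 = 5 * k + 7 := by omega
  have e5 : 3 * (2 + k) + 2 = 3 * k + 8 := by omega
  have e6 : 3 * (2 + k) - 2 = 3 * k + 4 := by omega
  rw [e1, e2, e3, e4, e5, e6]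
  exact key k
end

section
/- The shuffle multiplication on ⊕_d R[z_1^{±1},…,z_d^{±1}]^{𝔖_d} defined by (f * g)(z_1,…,z_n) = Σ_{σ ∈ Sh_{d,e}} σ·[K_{d,e}(z_1,…,z_n)·f(z_1,…,z_d)·g(z_{d+1},…,z_n)], where the kernel satisfies the cocycle condition K_{d,e+f}(z)·K_{e,f}(z_{d+1},…,z_n) = K_{d+e,f}(z)·K_{d,e}(z_1,…,z_{d+e}) (which holds whenever K_{d,e}(z) = ∏_{1≤l≤d<k≤n} κ(z_l/z_k) for a fixed rational function κ), is associative. -/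
open Finset

section Helpers
variable {n m k : ℕ}

lemma map_orderEmbOfFin_univ (A : Finset (Fin n)) (hA : A.card = m) :
    (univ : Finset (Fin m)).map (A.orderEmbOfFin hA).toEmbedding = A := by
  apply eq_of_subset_of_card_le
  · intro x hx
    simp only [mem_map, mem_univ, true_and] at hx
    obtain ⟨i, rfl⟩ := hx
    exact orderEmbOfFin_mem A hA i
  · rw [card_map, card_univ, Fintype.card_fin, hA]

lemma orderEmbOfFin_map (A : Finset (Fin n)) (hA : A.card = m) (B : Finset (Fin m))
    (hB : B.card = k) (h' : (B.map (A.orderEmbOfFin hA).toEmbedding).card = k) (i : Fin k) :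
    (B.map (A.orderEmbOfFin hA).toEmbedding).orderEmbOfFin h' i =
      A.orderEmbOfFin hA (B.orderEmbOfFin hB i) := by
  have : (fun i => A.orderEmbOfFin hA (B.orderEmbOfFin hB i)) =
      (B.map (A.orderEmbOfFin hA).toEmbedding).orderEmbOfFin h' := by
    apply orderEmbOfFin_unique
    · intro x
      simp only [mem_map, RelEmbedding.coe_toEmbedding]
      exact ⟨_, orderEmbOfFin_mem B hB x, rfl⟩
    · exact (A.orderEmbOfFin hA).strictMono.comp (B.orderEmbOfFin hB).strictMono
  exact (congrFun this i).symm

lemma filter_map_orderEmbOfFin (A : Finset (Fin n)) (hA : A.card = m)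
    {S : Finset (Fin n)} (hSA : S ⊆ A) :
    ((univ : Finset (Fin m)).filter fun i => A.orderEmbOfFin hA i ∈ S).map
      (A.orderEmbOfFin hA).toEmbedding = S := by
  ext x
  simp only [mem_map, mem_filter, mem_univ, true_and, RelEmbedding.coe_toEmbedding]
  constructor
  · rintro ⟨i, hi, rfl⟩; exact hi
  · intro hx
    have : x ∈ Set.range (A.orderEmbOfFin hA) := by
      rw [range_orderEmbOfFin]; exact hSA hx
    obtain ⟨i, rfl⟩ := this
    exact ⟨i, hx, rfl⟩

lemma oEoF_congr {S S' : Finset (Fin n)} (hSS : S = S') (h : S.card = k) (h' : S'.card = k) :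
    S.orderEmbOfFin h = S'.orderEmbOfFin h' := by subst hSS; rfl

lemma mapComplEmb (A : Finset (Fin n)) (hA : A.card = m) (B : Finset (Fin m)) :
    Bᶜ.map (A.orderEmbOfFin hA).toEmbedding = A \ B.map (A.orderEmbOfFin hA).toEmbedding := by
  have hinj := (A.orderEmbOfFin hA).injective
  ext x
  simp only [compl_eq_univ_sdiff, mem_map, mem_sdiff, mem_univ, true_and,
    RelEmbedding.coe_toEmbedding]
  constructor
  · rintro ⟨i, hi, rfl⟩
    exact ⟨orderEmbOfFin_mem A hA i, fun ⟨j, hj, hji⟩ => hi (hinj hji ▸ hj)⟩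
  · rintro ⟨hxA, hx⟩
    have : x ∈ Set.range (A.orderEmbOfFin hA) := by rw [range_orderEmbOfFin]; exact hxA
    obtain ⟨i, rfl⟩ := this
    exact ⟨i, fun hiB => hx ⟨i, hiB, rfl⟩, rfl⟩

end Helpers

section Canon
variable {R : Type*} [CommRing R]

def pairsSet (n d e : ℕ) : Finset (Finset (Fin n) × Finset (Fin n)) :=
  ((univ : Finset (Fin n)).powersetCard d ×ˢ (univ : Finset (Fin n)).powersetCard e).filter
    fun q => Disjoint q.1 q.2

lemma mem_pairsSet {n d e : ℕ} {p : Finset (Fin n) × Finset (Fin n)} :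
    p ∈ pairsSet n d e ↔ p.1.card = d ∧ p.2.card = e ∧ Disjoint p.1 p.2 := by
  simp only [pairsSet, mem_filter, mem_product, mem_powersetCard_univ, and_assoc]

lemma pairsSet_cardU {n d e c : ℕ} (hn : n = d + e + c) {p : Finset (Fin n) × Finset (Fin n)}
    (hp : p ∈ pairsSet n d e) : (p.1 ∪ p.2)ᶜ.card = c := by
  obtain ⟨h1, h2, h3⟩ := mem_pairsSet.mp hp
  rw [card_compl, card_union_of_disjoint h3, h1, h2, Fintype.card_fin]
  omega

noncomputable def canon (κ : Rˣ → R) (n d e c : ℕ) (hn : n = d + e + c)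
    (f : (Fin d → Rˣ) → R) (g : (Fin e → Rˣ) → R) (h : (Fin c → Rˣ) → R)
    (z : Fin n → Rˣ) : R :=
  ∑ p ∈ (pairsSet n d e).attach,
    (∏ l ∈ p.1.1, ∏ k ∈ p.1.2, κ (z l / z k)) *
    (∏ l ∈ p.1.1, ∏ k ∈ (p.1.1 ∪ p.1.2)ᶜ, κ (z l / z k)) *
    (∏ l ∈ p.1.2, ∏ k ∈ (p.1.1 ∪ p.1.2)ᶜ, κ (z l / z k)) *
    f (fun i => z (p.1.1.orderEmbOfFin (mem_pairsSet.mp p.2).1 i)) *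
    g (fun j => z (p.1.2.orderEmbOfFin (mem_pairsSet.mp p.2).2.1 j)) *
    h (fun m => z ((p.1.1 ∪ p.1.2)ᶜ.orderEmbOfFin (pairsSet_cardU hn p.2) m))

end Canon

/-- The shuffle multiplication with multiplicative kernel
`K_{d,e}(z) = ∏_{1≤l≤d<k≤d+e} κ(z_l/z_k)`.  An element of degree `d` is a function of
`d` invertible variables; the sum over `(d,e)`-shuffles is realised as the sum over
the `d`-element subsets `A` of the `d+e` variable positions (the variables in `A`,
taken in increasing order, are fed to `f`, the rest to `g`). -/
noncomputable def shmul {R : Type*} [CommRing R] (κ : Rˣ → R) {d e : ℕ}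
    (f : (Fin d → Rˣ) → R) (g : (Fin e → Rˣ) → R) :
    (Fin (d + e) → Rˣ) → R := fun z =>
  ∑ A ∈ ((Finset.univ : Finset (Fin (d + e))).powersetCard d).attach,
    (∏ l ∈ A.1, ∏ k ∈ A.1ᶜ, κ (z l / z k)) *
      f (fun i => z (A.1.orderEmbOfFin (Finset.mem_powersetCard_univ.mp A.2) i)) *
      g (fun j => z ((A.1ᶜ).orderEmbOfFin
        (by
          have h := Finset.mem_powersetCard_univ.mp A.2
          rw [Finset.card_compl, h, Fintype.card_fin]
          omega) j))

section Main
variable {R : Type*} [CommRing R]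

lemma left_eq (κ : Rˣ → R) {d e c : ℕ}
    (f : (Fin d → Rˣ) → R) (g : (Fin e → Rˣ) → R) (h : (Fin c → Rˣ) → R)
    (z : Fin (d + e + c) → Rˣ) :
    shmul κ (shmul κ f g) h z = canon κ (d + e + c) d e c rfl f g h z := by
  simp only [shmul, Finset.mul_sum, Finset.sum_mul]
  rw [← Finset.sum_product']
  rw [canon]
  refine Finset.sum_nbij'
    (fun x => ⟨(x.2.1.map (x.1.1.orderEmbOfFin (mem_powersetCard_univ.mp x.1.2)).toEmbedding,
        x.2.1ᶜ.map (x.1.1.orderEmbOfFin (mem_powersetCard_univ.mp x.1.2)).toEmbedding), by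
      refine mem_pairsSet.mpr ⟨?_, ?_, ?_⟩
      · rw [card_map, mem_powersetCard_univ.mp x.2.2]
      · rw [card_map, card_compl, mem_powersetCard_univ.mp x.2.2, Fintype.card_fin]; omega
      · rw [Finset.disjoint_map]
        exact disjoint_compl_right⟩)
    (fun q => (⟨q.1.1 ∪ q.1.2, mem_powersetCard_univ.mpr (by
        obtain ⟨h1, h2, h3⟩ := mem_pairsSet.mp q.2
        rw [card_union_of_disjoint h3, h1, h2])⟩,
      ⟨univ.filter fun i => (q.1.1 ∪ q.1.2).orderEmbOfFin (by
          obtain ⟨h1, h2, h3⟩ := mem_pairsSet.mp q.2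
          rw [card_union_of_disjoint h3, h1, h2]) i ∈ q.1.1, mem_powersetCard_univ.mpr (by
        obtain ⟨h1, h2, h3⟩ := mem_pairsSet.mp q.2
        have := filter_map_orderEmbOfFin (q.1.1 ∪ q.1.2) (by
          rw [card_union_of_disjoint h3, h1, h2]) (S := q.1.1) subset_union_left
        have hc := congrArg Finset.card this
        rw [card_map] at hc
        rw [hc, h1])⟩))
    (fun x _ => mem_attach _ _)
    (fun q _ => Finset.mem_product.mpr ⟨mem_attach _ _, mem_attach _ _⟩)
    ?_ ?_ ?_
  · rintro ⟨⟨A, hA⟩, ⟨B, hB⟩⟩ -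
    have hAc := mem_powersetCard_univ.mp hA
    have hST : B.map (A.orderEmbOfFin hAc).toEmbedding ∪
        Bᶜ.map (A.orderEmbOfFin hAc).toEmbedding = A := by
      rw [← Finset.map_union, union_compl, map_orderEmbOfFin_univ]
    simp only [Prod.ext_iff, Subtype.ext_iff]
    refine ⟨hST, ?_⟩
    ext i
    simp only [mem_filter, mem_univ, true_and]
    rw [oEoF_congr hST _ hAc]
    exact ⟨fun hi => by
        obtain ⟨j, hj, hji⟩ := Finset.mem_map.mp hi
        exact ((A.orderEmbOfFin hAc).injective hji) ▸ hj,
      fun hi => Finset.mem_map_of_mem _ hi⟩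
  · rintro ⟨⟨S, T⟩, hq⟩ -
    dsimp only
    have hq' := (mem_pairsSet (p := (S, T))).mp hq
    obtain ⟨h1, h2, h3⟩ := hq'
    have hcard : (S ∪ T).card = d + e := by rw [card_union_of_disjoint h3, h1, h2]
    have hS : ((univ.filter fun i => (S ∪ T).orderEmbOfFin hcard i ∈ S)).map
        ((S ∪ T).orderEmbOfFin hcard).toEmbedding = S :=
      filter_map_orderEmbOfFin _ hcard subset_union_left
    have hT : ((univ.filter fun i => (S ∪ T).orderEmbOfFin hcard i ∈ S))ᶜ.map
        ((S ∪ T).orderEmbOfFin hcard).toEmbedding = T := by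
      rw [mapComplEmb _ hcard, hS, union_sdiff_cancel_left h3]
    exact Subtype.ext (Prod.ext hS hT)
  · rintro ⟨⟨A, hA⟩, ⟨B, hB⟩⟩ -
    have hAc := mem_powersetCard_univ.mp hA
    have hBc := mem_powersetCard_univ.mp hB
    set emb := A.orderEmbOfFin hAc with hemb
    have hST : B.map emb.toEmbedding ∪ Bᶜ.map emb.toEmbedding = A := by
      rw [← Finset.map_union, union_compl, map_orderEmbOfFin_univ]
    have hU : (B.map emb.toEmbedding ∪ Bᶜ.map emb.toEmbedding)ᶜ = Aᶜ := by rw [hST]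
    dsimp only
    have hBcc : Bᶜ.card = e := by
      rw [card_compl, hBc, Fintype.card_fin]; omega
    have hAcc : Aᶜ.card = c := by
      rw [card_compl, hAc, Fintype.card_fin]; omega
    have hKA : ∏ l ∈ A, ∏ k ∈ Aᶜ, κ (z l / z k) =
        (∏ l ∈ B, ∏ k ∈ Aᶜ, κ (z (emb l) / z k)) *
          ∏ l ∈ Bᶜ, ∏ k ∈ Aᶜ, κ (z (emb l) / z k) := by
      rw [← hST, prod_union (by rw [Finset.disjoint_map]; exact disjoint_compl_right),
        Finset.prod_map, Finset.prod_map]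
      rfl
    simp only [Finset.prod_map, RelEmbedding.coe_toEmbedding,
      show ∀ h' i, (B.map emb.toEmbedding).orderEmbOfFin h' i = emb (B.orderEmbOfFin hBc i)
        from orderEmbOfFin_map A hAc B hBc,
      show ∀ h' i, (Bᶜ.map emb.toEmbedding).orderEmbOfFin h' i = emb (Bᶜ.orderEmbOfFin hBcc i)
        from orderEmbOfFin_map A hAc Bᶜ hBcc,
      oEoF_congr (h' := hAcc) hU, hU]
    rw [hKA]
    ring


lemma right_eq (κ : Rˣ → R) {d e c : ℕ}
    (f : (Fin d → Rˣ) → R) (g : (Fin e → Rˣ) → R) (h : (Fin c → Rˣ) → R)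
    (z : Fin (d + (e + c)) → Rˣ) :
    shmul κ f (shmul κ g h) z =
      canon κ (d + (e + c)) d e c (add_assoc d e c).symm f g h z := by
  simp only [shmul, Finset.mul_sum, Finset.sum_mul]
  rw [← Finset.sum_product']
  rw [canon]
  have hcompl : ∀ {S : Finset (Fin (d + (e + c)))}, S.card = d → Sᶜ.card = e + c := by
    intro S hS
    rw [card_compl, hS, Fintype.card_fin]; omega
  refine Finset.sum_nbij'
    (fun x => ⟨(x.1.1,
        x.2.1.map (x.1.1ᶜ.orderEmbOfFin (hcompl (mem_powersetCard_univ.mp x.1.2))).toEmbedding), by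
      refine mem_pairsSet.mpr ⟨mem_powersetCard_univ.mp x.1.2, ?_, ?_⟩
      · rw [card_map, mem_powersetCard_univ.mp x.2.2]
      · refine disjoint_compl_right.mono_right (fun y hy => ?_)
        obtain ⟨i, hi, rfl⟩ := Finset.mem_map.mp hy
        exact orderEmbOfFin_mem _ _ i⟩)
    (fun q => (⟨q.1.1, mem_powersetCard_univ.mpr (mem_pairsSet.mp q.2).1⟩,
      ⟨univ.filter fun i =>
          (q.1.1ᶜ.orderEmbOfFin (hcompl (mem_pairsSet.mp q.2).1)) i ∈ q.1.2,
        mem_powersetCard_univ.mpr (by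
          obtain ⟨h1, h2, h3⟩ := mem_pairsSet.mp q.2
          have hTsub : q.1.2 ⊆ q.1.1ᶜ := fun y hy =>
            mem_compl.mpr fun hyS => disjoint_left.mp h3 hyS hy
          have := filter_map_orderEmbOfFin q.1.1ᶜ (hcompl h1) hTsub
          have hc := congrArg Finset.card this
          rw [card_map] at hc
          rw [hc, h2])⟩))
    (fun x _ => mem_attach _ _)
    (fun q _ => Finset.mem_product.mpr ⟨mem_attach _ _, mem_attach _ _⟩)
    ?_ ?_ ?_
  · rintro ⟨⟨A, hA⟩, ⟨C, hC⟩⟩ -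
    simp only [Prod.ext_iff, Subtype.ext_iff]
    have hAc := mem_powersetCard_univ.mp hA
    refine ⟨trivial, ?_⟩
    ext i
    simp only [mem_filter, mem_univ, true_and]
    exact ⟨fun hi => by
        obtain ⟨j, hj, hji⟩ := Finset.mem_map.mp hi
        exact ((Aᶜ.orderEmbOfFin (hcompl hAc)).injective hji) ▸ hj,
      fun hi => Finset.mem_map_of_mem _ hi⟩
  · rintro ⟨⟨S, T⟩, hq⟩ -
    dsimp only
    have hq' := (mem_pairsSet (p := (S, T))).mp hq
    obtain ⟨h1, h2, h3⟩ := hq'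
    have hTsub : T ⊆ Sᶜ := fun y hy => mem_compl.mpr fun hyS => disjoint_left.mp h3 hyS hy
    exact Subtype.ext (Prod.ext rfl (filter_map_orderEmbOfFin Sᶜ (hcompl h1) hTsub))
  · rintro ⟨⟨S, hA⟩, ⟨C, hC⟩⟩ -
    dsimp only
    have hSc := mem_powersetCard_univ.mp hA
    have hCc := mem_powersetCard_univ.mp hC
    have hCcc : Cᶜ.card = c := by
      rw [card_compl, hCc, Fintype.card_fin]; omega
    set emb := Sᶜ.orderEmbOfFin (hcompl hSc) with hemb
    have hsplit : Sᶜ = C.map emb.toEmbedding ∪ Cᶜ.map emb.toEmbedding := by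
      rw [← Finset.map_union, union_compl, map_orderEmbOfFin_univ]
    have hU : (S ∪ C.map emb.toEmbedding)ᶜ = Cᶜ.map emb.toEmbedding := by
      rw [compl_union, mapComplEmb Sᶜ (hcompl hSc) C]
      ext x
      simp only [mem_inter, mem_compl, mem_sdiff, hemb]
    have hKA : ∏ l ∈ S, ∏ k ∈ Sᶜ, κ (z l / z k) =
        (∏ l ∈ S, ∏ k ∈ C, κ (z l / z (emb k))) *
          ∏ l ∈ S, ∏ k ∈ Cᶜ, κ (z l / z (emb k)) := by
      rw [← prod_mul_distrib]
      refine Finset.prod_congr rfl fun l _ => ?_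
      rw [hsplit, prod_union (by rw [Finset.disjoint_map]; exact disjoint_compl_right),
        Finset.prod_map, Finset.prod_map]
      rfl
    rw [hemb] at hU hKA
    simp only [Finset.prod_map, RelEmbedding.coe_toEmbedding,
      orderEmbOfFin_map Sᶜ (hcompl hSc) C hCc, orderEmbOfFin_map Sᶜ (hcompl hSc) Cᶜ hCcc,
      oEoF_congr (h' := show (Cᶜ.map emb.toEmbedding).card = c by rw [card_map, hCcc]) hU, hU]
    rw [hKA]
    ring

lemma canon_relabel (κ : Rˣ → R) {n n' d e c : ℕ} (hnn : n = n') (hn : n = d + e + c)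
    (hn' : n' = d + e + c)
    (f : (Fin d → Rˣ) → R) (g : (Fin e → Rˣ) → R) (h : (Fin c → Rˣ) → R)
    (w : Fin n' → Rˣ) :
    canon κ n' d e c hn' f g h w = canon κ n d e c hn f g h (w ∘ finCongr hnn) := by
  subst hnn
  have hw : w ∘ ⇑(finCongr rfl) = w := by
    funext i; simp
  rw [hw]

end Main

/-- the shuffle multiplication on symmetric functions, with kernel
`K_{d,e}(z) = ∏_{1≤l≤d<k≤n} κ(z_l/z_k)` (which satisfies the cocycle condition), is
associative. -/
theorem stmt_12 {R : Type*} [CommRing R] (κ : Rˣ → R) {d e c : ℕ}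
    (f : (Fin d → Rˣ) → R) (g : (Fin e → Rˣ) → R) (h : (Fin c → Rˣ) → R)
    (hf : ∀ σ : Equiv.Perm (Fin d), ∀ z, f (z ∘ σ) = f z)
    (hg : ∀ σ : Equiv.Perm (Fin e), ∀ z, g (z ∘ σ) = g z)
    (hh : ∀ σ : Equiv.Perm (Fin c), ∀ z, h (z ∘ σ) = h z) :
    ∀ z : Fin (d + e + c) → Rˣ,
      shmul κ (shmul κ f g) h z =
        shmul κ f (shmul κ g h) (z ∘ (finCongr (add_assoc d e c)).symm) := by
  intro z
  rw [left_eq, right_eq,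
    canon_relabel κ (add_assoc d e c) rfl (add_assoc d e c).symm f g h]
  have hz : (z ∘ ⇑(finCongr (add_assoc d e c)).symm) ∘ ⇑(finCongr (add_assoc d e c)) = z := by
    funext i; simp
  rw [hz]
end
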